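/- For all real a > 0 and b > 0, ∫₀^∞ e^{−a²x² − b²/x²} dx = (√π/(2a)) e^{−2ab}. -/

import Mathlib

/-!
Write `a²x² + b²/x² = (ax - b/x)² + 2ab`. The map `x ↦ ax - b/x` is an increasing bijection from
`(0, ∞)` onto `ℝ`, whose inverse `φ` has derivative `φ'` with `φ'(u) + φ'(-u) = 1/a`. Since the Gaussian
is even, substituting `x = φ(u)` turns the integral into `e^{-2ab}/(2a) · ∫ e^{-u²} du = e^{-2ab} √π/(2a)`.
-/

open MeasureTheory Real Set

theorem integral_smul_eq_of_add_comp_neg_eq {G E : Type*} [MeasurableSpace G] [AddGroup G]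
    [MeasurableNeg G] [NormedAddCommGroup E] [NormedSpace ℝ E] {μ : Measure G} [μ.IsNegInvariant]
    {w : G → ℝ} {g : G → E} {C : ℝ} (hw : ∀ u, w u + w (-u) = C) (hg : ∀ u, g (-u) = g u)
    (hwg : Integrable (fun u => w u • g u) μ) :
    ∫ u, w u • g u ∂μ = (C / 2) • ∫ u, g u ∂μ := by
  have hneg : ∫ u, w (-u) • g u ∂μ = ∫ u, w u • g u ∂μ := by
    simpa only [neg_neg, hg] using (integral_neg_eq_self (fun u => w (-u) • g u) μ).symm
  have hwg_neg : Integrable (fun u => w (-u) • g u) μ := by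
    simpa only [hg] using hwg.comp_neg
  have hsum : ∫ u, w u • g u ∂μ + ∫ u, w (-u) • g u ∂μ = C • ∫ u, g u ∂μ := by
    rw [← integral_add hwg hwg_neg, ← integral_smul]
    simp only [← add_smul, hw]
  rw [hneg, ← two_smul ℝ] at hsum
  rw [div_eq_inv_mul, mul_smul, ← hsum, smul_smul, inv_mul_cancel₀ two_ne_zero, one_smul]

lemma abs_lt_sqrt_sq_add (u : ℝ) {c : ℝ} (hc : 0 < c) : |u| < √(u ^ 2 + c) := by
  rw [← sqrt_sq_eq_abs]
  exact sqrt_lt_sqrt (sq_nonneg u) (by linarith)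

/-- The positive root `x` of `a x² - u x - b = 0`, i.e. the solution of `a x - b / x = u`. -/
noncomputable def quadPosRoot (a b u : ℝ) : ℝ := (u + √(u ^ 2 + 4 * a * b)) / (2 * a)

noncomputable def quadPosRootDeriv (a b u : ℝ) : ℝ := (1 + u / √(u ^ 2 + 4 * a * b)) / (2 * a)

section QuadPosRoot

variable {a b : ℝ} (ha : 0 < a) (hb : 0 < b)
include ha hb

lemma abs_lt_sqrt_sq_add_mul (u : ℝ) : |u| < √(u ^ 2 + 4 * a * b) :=
  abs_lt_sqrt_sq_add u (by positivity)

lemma quadPosRoot_pos (u : ℝ) : 0 < quadPosRoot a b u := by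
  have hs := abs_lt_sqrt_sq_add_mul ha hb u
  exact div_pos (by linarith [neg_abs_le u]) (by positivity)

lemma quadPosRootDeriv_pos (u : ℝ) : 0 < quadPosRootDeriv a b u := by
  have hs := abs_lt_sqrt_sq_add_mul ha hb u
  have hu : -1 < u / √(u ^ 2 + 4 * a * b) := by
    rw [lt_div_iff₀ ((abs_nonneg u).trans_lt hs)]
    linarith [neg_abs_le u]
  exact div_pos (by linarith) (by positivity)

lemma quadPosRootDeriv_le (u : ℝ) : quadPosRootDeriv a b u ≤ a⁻¹ := by
  have hs := abs_lt_sqrt_sq_add_mul ha hb u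
  have hu : u / √(u ^ 2 + 4 * a * b) ≤ 1 := by
    rw [div_le_one ((abs_nonneg u).trans_lt hs)]
    linarith [le_abs_self u]
  rw [quadPosRootDeriv, div_le_iff₀ (by positivity), inv_mul_eq_div, mul_div_assoc,
    div_self ha.ne']
  linarith

omit hb in
lemma quadPosRootDeriv_add_neg (u : ℝ) :
    quadPosRootDeriv a b u + quadPosRootDeriv a b (-u) = a⁻¹ := by
  simp only [quadPosRootDeriv, neg_sq]
  field_simp
  ring

lemma hasDerivAt_quadPosRoot (u : ℝ) :
    HasDerivAt (quadPosRoot a b) (quadPosRootDeriv a b u) u := by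
  have hs := (abs_nonneg u).trans_lt (abs_lt_sqrt_sq_add_mul ha hb u)
  have hsq : HasDerivAt (fun u => √(u ^ 2 + 4 * a * b)) (u / √(u ^ 2 + 4 * a * b)) u := by
    convert ((hasDerivAt_pow 2 u).add_const (4 * a * b)).sqrt (by positivity) using 1
    field_simp
    ring
  exact ((hasDerivAt_id u).add hsq).div_const (2 * a)

lemma mul_quadPosRoot_sub_div (u : ℝ) :
    a * quadPosRoot a b u - b / quadPosRoot a b u = u := by
  have hx : 0 < u + √(u ^ 2 + 4 * a * b) := by
    linarith [neg_abs_le u, abs_lt_sqrt_sq_add_mul ha hb u]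
  have hs : √(u ^ 2 + 4 * a * b) ^ 2 = u ^ 2 + 4 * a * b := sq_sqrt (by positivity)
  rw [quadPosRoot]
  generalize √(u ^ 2 + 4 * a * b) = s at hx hs
  field_simp
  linear_combination hs

lemma quadPosRoot_mul_sub_div {x : ℝ} (hx : 0 < x) : quadPosRoot a b (a * x - b / x) = x := by
  have hsq : (a * x - b / x) ^ 2 + 4 * a * b = (a * x + b / x) ^ 2 := by
    field_simp
    ring
  rw [quadPosRoot, hsq, sqrt_sq (by positivity)]
  field_simp
  ring

lemma range_quadPosRoot : range (quadPosRoot a b) = Ioi 0 :=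
  Subset.antisymm (range_subset_iff.2 (quadPosRoot_pos ha hb))
    fun x hx => ⟨a * x - b / x, quadPosRoot_mul_sub_div ha hb hx⟩

theorem integral_Ioi_comp_mul_sub_div {E : Type*} [NormedAddCommGroup E] [NormedSpace ℝ E]
    (F : ℝ → E) :
    ∫ x in Ioi 0, F (a * x - b / x) = ∫ u, quadPosRootDeriv a b u • F u := by
  have hinj : (univ : Set ℝ).InjOn (quadPosRoot a b) :=
    (Function.LeftInverse.injective (g := fun x => a * x - b / x)
      (mul_quadPosRoot_sub_div ha hb)).injOn
  rw [← range_quadPosRoot ha hb, ← image_univ,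
    integral_image_eq_integral_abs_deriv_smul MeasurableSet.univ
      (fun u _ => (hasDerivAt_quadPosRoot ha hb u).hasDerivWithinAt) hinj, Measure.restrict_univ]
  simp only [mul_quadPosRoot_sub_div ha hb, fun u => abs_of_pos (quadPosRootDeriv_pos ha hb u)]

/-- The Cauchy–Schlömilch transformation. -/
theorem integral_Ioi_comp_mul_sub_div_of_even {E : Type*} [NormedAddCommGroup E]
    [NormedSpace ℝ E] {F : ℝ → E} (hF : Integrable F) (heven : ∀ u, F (-u) = F u) :
    ∫ x in Ioi 0, F (a * x - b / x) = (2 * a)⁻¹ • ∫ u, F u := by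
  have hcont : Continuous (quadPosRootDeriv a b) :=
    ((continuous_const.add (continuous_id.div (by fun_prop)
      fun u => ((abs_nonneg u).trans_lt (abs_lt_sqrt_sq_add_mul ha hb u)).ne')).div_const _)
  have hint : Integrable (fun u => quadPosRootDeriv a b u • F u) :=
    hF.bdd_smul a⁻¹ hcont.aestronglyMeasurable <| ae_of_all _ fun u => by
      rw [norm_of_nonneg (quadPosRootDeriv_pos ha hb u).le]
      exact quadPosRootDeriv_le ha hb u
  rw [integral_Ioi_comp_mul_sub_div ha hb,
    integral_smul_eq_of_add_comp_neg_eq (quadPosRootDeriv_add_neg ha) heven hint, mul_inv,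
    inv_mul_eq_div]

end QuadPosRoot

theorem integral_exp_neg_sq_add_inv_sq (a b : ℝ) (ha : 0 < a) (hb : 0 < b) :
    ∫ x in Set.Ioi (0:ℝ), Real.exp (-(a ^ 2 * x ^ 2) - b ^ 2 / x ^ 2)
      = (Real.sqrt π / (2 * a)) * Real.exp (-(2 * a * b)) := by
  have hsplit : ∀ x ∈ Ioi (0 : ℝ), exp (-(a ^ 2 * x ^ 2) - b ^ 2 / x ^ 2)
      = exp (-(2 * a * b)) * exp (-(a * x - b / x) ^ 2) := fun x hx => by
    rw [← exp_add]
    congr 1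
    field_simp [(mem_Ioi.1 hx).ne']
    ring
  have hgauss : Integrable fun u : ℝ => exp (-u ^ 2) := by
    simpa using integrable_exp_neg_mul_sq one_pos
  calc ∫ x in Ioi 0, exp (-(a ^ 2 * x ^ 2) - b ^ 2 / x ^ 2)
      = exp (-(2 * a * b)) * ∫ x in Ioi 0, exp (-(a * x - b / x) ^ 2) := by
        rw [setIntegral_congr_fun measurableSet_Ioi hsplit, integral_const_mul]
    _ = exp (-(2 * a * b)) * ((2 * a)⁻¹ * ∫ u, exp (-u ^ 2)) := by
        rw [integral_Ioi_comp_mul_sub_div_of_even ha hb hgauss (by simp), smul_eq_mul]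
    _ = √π / (2 * a) * exp (-(2 * a * b)) := by
        rw [show (fun u : ℝ => exp (-u ^ 2)) = fun u => exp (-1 * u ^ 2) by simp,
          integral_gaussian, div_one]
        ring
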